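/- ε-Completeness of Proof Rule #1: let S be a countable set with the discrete σ-algebra, P a Markov kernel on S, μ an initial probability measure on S, and (A₁,B₁),…,(A_k,B_k) subsets of S. Suppose P_μ(⋂_{i=1}^k (Fin(A_i) ∪ Inf(B_i))) = p for some p ∈ (0,1]. Then for every ε > 0 there exist: a region I ⊆ S with a function V₀ : S → [0,∞); regions J₁,…,J_k with J_i ⊆ I \ A_i; functions V₁,W₁,…,V_k,W_k : S → [0,∞); and ranking functions U₁,…,U_k : S → ℕ, satisfying for every i = 1,…,k: (a) PV_i(s) ≤ V_i(s) for all s ∉ A_i; (b) V_i(s) ≥ 1 for all s ∈ A_i; (c) there exists γ_i > 0 with V_i(s) ≤ 1 − γ_i for all s ∈ J_i; (d) PW_i(s) ≤ W_i(s) for all s ∈ I \ (B_i ∪ J_i); (e) W_i(s) > 0 for all s ∈ I \ (B_i ∪ J_i); (f) W_i(s) = 0 and U_i(s) = 0 for all s ∈ I ∩ (B_i ∪ J_i); (g) for every r ≥ 0 there exists ε_r > 0 such that for all s ∈ I \ (B_i ∪ J_i) with W_i(s) ≤ r, P(s, {s' : U_i(s') < U_i(s)}) ≥ ε_r; (h)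 for every r ≥ 0, the image U_i[{s ∈ I : W_i(s) ≤ r}] is a bounded subset of ℕ; together with (i) PV₀(s) ≤ V₀(s) for all s ∈ I, (j) V₀(s) ≥ 1 for all s ∉ I, and (k) μV₀ ≤ 1 − p + ε. -/

import Mathlib

open MeasureTheory ProbabilityTheory Filter Set ENNReal

/-- The one-step shift on trajectories: `shift ω n = ω (n+1)`. -/
def shift {S : Type*} (ω : ℕ → S) : ℕ → S := fun n => ω (n + 1)

/-- `Fin A`: the event of visiting `A` only finitely many times. -/
def finVisits {S : Type*} (A : Set S) : Set (ℕ → S) :=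
  {ω | ∃ n, ∀ m, n ≤ m → ω m ∉ A}

/-- `Inf B`: the event of visiting `B` infinitely many times. -/
def infVisits {S : Type*} (B : Set S) : Set (ℕ → S) :=
  {ω | ∀ n, ∃ m, n ≤ m ∧ ω m ∈ B}

/-- `{σ_A < ∞}`: the event that the first return time to `A` is finite,
where `σ_A = 1 + τ_A ∘ shift`; equivalently `∃ n, ω (n+1) ∈ A`. -/
def retEvent {S : Type*} (A : Set S) : Set (ℕ → S) := {ω | ∃ n, ω (n + 1) ∈ A}

/-- `I^ω`: the event of remaining in `I` forever. -/
def invEvent {S : Type*} (I : Set S) : Set (ℕ → S) := {ω | ∀ n, ω n ∈ I}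

/-- Prepend a state to a trajectory. -/
def consTraj {S : Type*} (s : S) (ω : ℕ → S) : ℕ → S
  | 0 => s
  | n + 1 => ω n

/-- `T` is the Ionescu–Tulcea trajectory kernel of the time-homogeneous Markov chain with
transition kernel `P`: `T s` is the law on `S^ℕ` (with the product σ-algebra) of the
coordinate Markov chain with kernel `P` started at `s`.  It is uniquely characterised
(by the Ionescu–Tulcea theorem) by the one-step Markov recursion below: the trajectory
from `s` is `s` followed by a trajectory started from a `P s`-distributed state.
The trajectory measure `P_ξ` with initial distribution `ξ` is then `ξ.bind (fun s => T s)`,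
and `P_{δ_s} = T s`. -/
def IsTrajKernel {S : Type*} [MeasurableSpace S] (P : Kernel S S)
    (T : Kernel S (ℕ → S)) : Prop :=
  ∀ s : S, (T s : Measure (ℕ → S)) =
    ((P s : Measure S).bind (fun u => (T u : Measure (ℕ → S)))).map (consTraj s)

/-! ### Auxiliary events -/

/-- stay in `X` through time `n`. -/
def stayE {S : Type*} (X : Set S) (n : ℕ) : Set (ℕ → S) := {ω | ∀ m ≤ n, ω m ∈ X}

/-- avoid `A` forever. -/
def avoidE {S : Type*} (A : Set S) : Set (ℕ → S) := {ω | ∀ n, ω n ∉ A}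

/-- at time `N` in `C`, and avoid `A` from `N` on. -/
def tailE {S : Type*} (C A : Set S) (N : ℕ) : Set (ℕ → S) :=
  {ω | ω N ∈ C ∧ ∀ m, N ≤ m → ω m ∉ A}

set_option linter.unusedSectionVars false
section Aux
variable {S : Type*} [MeasurableSpace S] [DiscreteMeasurableSpace S] [Countable S]

@[simp] lemma consTraj_zero (s : S) (ω : ℕ → S) : consTraj s ω 0 = s := rfl
@[simp] lemma consTraj_succ (s : S) (ω : ℕ → S) (n : ℕ) : consTraj s ω (n + 1) = ω n := rfl

lemma measurable_consTraj (s : S) : Measurable (consTraj s) := by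
  apply measurable_pi_lambda
  intro n
  cases n with
  | zero => exact measurable_const
  | succ n => exact measurable_pi_apply n

lemma meas_coord (n : ℕ) (C : Set S) : MeasurableSet {ω : ℕ → S | ω n ∈ C} :=
  measurable_pi_apply n MeasurableSet.of_discrete

lemma meas_stayE (X : Set S) (n : ℕ) : MeasurableSet (stayE X n) := by
  have : stayE X n = ⋂ m, ⋂ (_ : m ≤ n), {ω : ℕ → S | ω m ∈ X} := by
    ext ω; simp [stayE]
  rw [this]
  exact MeasurableSet.iInter fun m => MeasurableSet.iInter fun _ => meas_coord m X

lemma meas_avoidE (A : Set S) : MeasurableSet (avoidE A) := by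
  have : avoidE A = ⋂ n, {ω : ℕ → S | ω n ∈ Aᶜ} := by ext ω; simp [avoidE]
  rw [this]; exact MeasurableSet.iInter fun n => meas_coord n Aᶜ

lemma meas_invEvent (X : Set S) : MeasurableSet (invEvent X) := by
  have : invEvent X = ⋂ n, {ω : ℕ → S | ω n ∈ X} := by ext ω; simp [invEvent]
  rw [this]; exact MeasurableSet.iInter fun n => meas_coord n X

lemma meas_tailE (C A : Set S) (N : ℕ) : MeasurableSet (tailE C A N) := by
  have : tailE C A N = {ω : ℕ → S | ω N ∈ C} ∩ ⋂ m, ⋂ (_ : N ≤ m), {ω : ℕ → S | ω m ∈ Aᶜ} := by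
    ext ω; simp [tailE]
  rw [this]
  exact (meas_coord N C).inter
    (MeasurableSet.iInter fun m => MeasurableSet.iInter fun _ => meas_coord m Aᶜ)

lemma meas_finVisits (A : Set S) : MeasurableSet (finVisits A) := by
  have : finVisits A = ⋃ n, ⋂ m, ⋂ (_ : n ≤ m), {ω : ℕ → S | ω m ∈ Aᶜ} := by
    ext ω; simp [finVisits]
  rw [this]
  exact MeasurableSet.iUnion fun n =>
    MeasurableSet.iInter fun m => MeasurableSet.iInter fun _ => meas_coord m Aᶜ

lemma meas_infVisits (B : Set S) : MeasurableSet (infVisits B) := by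
  have : infVisits B = ⋂ n, ⋃ m, ⋃ (_ : n ≤ m), {ω : ℕ → S | ω m ∈ B} := by
    ext ω; simp [infVisits]
  rw [this]
  exact MeasurableSet.iInter fun n =>
    MeasurableSet.iUnion fun m => MeasurableSet.iUnion fun _ => meas_coord m B

/-! ### Preimage computations -/

lemma pre_coord0_mem {s : S} {C : Set S} (h : s ∈ C) :
    consTraj s ⁻¹' {ω : ℕ → S | ω 0 ∈ C} = univ := by
  ext ω; simp [Set.mem_preimage, h]

lemma pre_coord0_not {s : S} {C : Set S} (h : s ∉ C) :
    consTraj s ⁻¹' {ω : ℕ → S | ω 0 ∈ C} = (∅ : Set (ℕ → S)) := by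
  ext ω; simp [Set.mem_preimage, h]

lemma pre_stayE_zero_mem {s : S} {X : Set S} (h : s ∈ X) :
    consTraj s ⁻¹' stayE X 0 = univ := by
  ext ω; simp [stayE, Nat.le_zero, h]

lemma pre_stayE_zero_not {s : S} {X : Set S} (h : s ∉ X) :
    consTraj s ⁻¹' stayE X 0 = (∅ : Set (ℕ → S)) := by
  ext ω; simp [stayE, Nat.le_zero, h]

lemma pre_stayE_succ_mem {s : S} {X : Set S} (h : s ∈ X) (n : ℕ) :
    consTraj s ⁻¹' stayE X (n + 1) = stayE X n := by
  ext ω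
  simp only [Set.mem_preimage, stayE, mem_setOf_eq]
  constructor
  · intro H m hm
    have := H (m + 1) (by omega)
    simpa using this
  · intro H m hm
    cases m with
    | zero => simpa using h
    | succ l => simpa using H l (by omega)

lemma pre_stayE_succ_not {s : S} {X : Set S} (h : s ∉ X) (n : ℕ) :
    consTraj s ⁻¹' stayE X (n + 1) = (∅ : Set (ℕ → S)) := by
  ext ω
  simp only [Set.mem_preimage, stayE, mem_setOf_eq, mem_empty_iff_false, iff_false]
  intro H
  exact h (by simpa using H 0 (by omega))

lemma pre_invEvent_mem {s : S} {X : Set S} (h : s ∈ X) :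
    consTraj s ⁻¹' invEvent X = invEvent X := by
  ext ω
  simp only [Set.mem_preimage, invEvent, mem_setOf_eq]
  constructor
  · intro H n; simpa using H (n + 1)
  · intro H n
    cases n with
    | zero => simpa using h
    | succ l => simpa using H l

lemma pre_invEvent_not {s : S} {X : Set S} (h : s ∉ X) :
    consTraj s ⁻¹' invEvent X = (∅ : Set (ℕ → S)) := by
  ext ω
  simp only [Set.mem_preimage, invEvent, mem_setOf_eq, mem_empty_iff_false, iff_false]
  intro H
  exact h (by simpa using H 0)

lemma avoidE_eq_invEvent (A : Set S) : avoidE A = invEvent Aᶜ := by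
  ext ω; simp [avoidE, invEvent]

lemma pre_avoidE_mem {s : S} {A : Set S} (h : s ∈ A) :
    consTraj s ⁻¹' avoidE A = (∅ : Set (ℕ → S)) := by
  rw [avoidE_eq_invEvent]; exact pre_invEvent_not (by simpa using h)

lemma pre_avoidE_not {s : S} {A : Set S} (h : s ∉ A) :
    consTraj s ⁻¹' avoidE A = avoidE A := by
  rw [avoidE_eq_invEvent, pre_invEvent_mem (by simpa using h), ← avoidE_eq_invEvent]

lemma pre_avoid_shift (s : S) (A : Set S) :
    consTraj s ⁻¹' {ω : ℕ → S | ∀ n, ω (n + 1) ∉ A} = avoidE A := by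
  ext ω; simp [avoidE, Set.mem_preimage]

lemma pre_tailE_succ (s : S) (C A : Set S) (N : ℕ) :
    consTraj s ⁻¹' tailE C A (N + 1) = tailE C A N := by
  ext ω
  simp only [Set.mem_preimage, tailE, mem_setOf_eq, consTraj_succ]
  constructor
  · rintro ⟨h1, h2⟩
    refine ⟨h1, fun m hm => ?_⟩
    have := h2 (m + 1) (by omega)
    simpa using this
  · rintro ⟨h1, h2⟩
    refine ⟨h1, fun m hm => ?_⟩
    cases m with
    | zero => omega
    | succ l => simpa using h2 l (by omega)

lemma pre_finVisits (s : S) (A : Set S) :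
    consTraj s ⁻¹' finVisits A = finVisits A := by
  ext ω
  simp only [Set.mem_preimage, finVisits, mem_setOf_eq]
  constructor
  · rintro ⟨n, hn⟩
    exact ⟨n, fun m hm => by simpa using hn (m + 1) (by omega)⟩
  · rintro ⟨n, hn⟩
    refine ⟨n + 1, fun m hm => ?_⟩
    cases m with
    | zero => omega
    | succ l => simpa using hn l (by omega)

lemma pre_infVisits (s : S) (B : Set S) :
    consTraj s ⁻¹' infVisits B = infVisits B := by
  ext ω
  simp only [Set.mem_preimage, infVisits, mem_setOf_eq]
  constructor
  · rintro H n
    obtain ⟨m, hm, hmem⟩ := H (n + 1)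
    cases m with
    | zero => omega
    | succ l => exact ⟨l, by omega, by simpa using hmem⟩
  · rintro H n
    obtain ⟨m, hm, hmem⟩ := H n
    exact ⟨m + 1, by omega, by simpa using hmem⟩


/-! ### Kernel-level lemmas -/

section Kernel
variable (P : Kernel S S) [IsMarkovKernel P] (T : Kernel S (ℕ → S)) [IsMarkovKernel T]

lemma step (hT : IsTrajKernel P T) (s : S) {E : Set (ℕ → S)} (hE : MeasurableSet E) :
    T s E = ∫⁻ u, T u (consTraj s ⁻¹' E) ∂(P s) := by
  rw [hT s, Measure.map_apply (measurable_consTraj s) hE,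
    Measure.bind_apply (measurable_consTraj s hE) T.measurable.aemeasurable]

/-- measure of a time-0 coordinate event. -/
lemma T_coord0_mem (hT : IsTrajKernel P T) {s : S} {C : Set S} (h : s ∈ C) :
    T s {ω : ℕ → S | ω 0 ∈ C} = 1 := by
  rw [step P T hT s (meas_coord 0 C), pre_coord0_mem h]
  simp

lemma T_coord0_not (hT : IsTrajKernel P T) {s : S} {C : Set S} (h : s ∉ C) :
    T s {ω : ℕ → S | ω 0 ∈ C} = 0 := by
  rw [step P T hT s (meas_coord 0 C), pre_coord0_not h]
  simp

lemma T_stayE_zero_mem (hT : IsTrajKernel P T) {s : S} {X : Set S} (h : s ∈ X) :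
    T s (stayE X 0) = 1 := by
  rw [step P T hT s (meas_stayE X 0), pre_stayE_zero_mem h]; simp

lemma T_stayE_not (hT : IsTrajKernel P T) {s : S} {X : Set S} (h : s ∉ X) (n : ℕ) :
    T s (stayE X n) = 0 := by
  have hsub : stayE X n ⊆ stayE X 0 := fun ω hω m hm => hω m (by omega)
  refine le_antisymm ?_ zero_le
  calc T s (stayE X n) ≤ T s (stayE X 0) := measure_mono hsub
  _ = 0 := by rw [step P T hT s (meas_stayE X 0), pre_stayE_zero_not h]; simp

lemma T_stayE_succ_mem (hT : IsTrajKernel P T) {s : S} {X : Set S} (h : s ∈ X) (n : ℕ) :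
    T s (stayE X (n + 1)) = ∫⁻ u, T u (stayE X n) ∂(P s) := by
  rw [step P T hT s (meas_stayE X (n+1)), pre_stayE_succ_mem h]

lemma T_invEvent_not (hT : IsTrajKernel P T) {s : S} {X : Set S} (h : s ∉ X) :
    T s (invEvent X) = 0 := by
  rw [step P T hT s (meas_invEvent X), pre_invEvent_not h]; simp

lemma T_invEvent_mem (hT : IsTrajKernel P T) {s : S} {X : Set S} (h : s ∈ X) :
    T s (invEvent X) = ∫⁻ u, T u (invEvent X) ∂(P s) := by
  rw [step P T hT s (meas_invEvent X), pre_invEvent_mem h]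

lemma T_avoidE_mem (hT : IsTrajKernel P T) {s : S} {A : Set S} (h : s ∈ A) :
    T s (avoidE A) = 0 := by
  rw [step P T hT s (meas_avoidE A), pre_avoidE_mem h]; simp

lemma T_tailE_succ (hT : IsTrajKernel P T) (s : S) (C A : Set S) (N : ℕ) :
    T s (tailE C A (N + 1)) = ∫⁻ u, T u (tailE C A N) ∂(P s) := by
  rw [step P T hT s (meas_tailE C A (N+1)), pre_tailE_succ]

/-- stay probabilities are antitone in time. -/
lemma stayE_anti {X : Set S} : Antitone (fun n => stayE (S := S) X n) :=
  fun n m hnm ω hω l hl => hω l (by omega)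

lemma iInter_stayE (X : Set S) : (⋂ n, stayE (S := S) X n) = invEvent X := by
  ext ω
  simp only [mem_iInter, stayE, invEvent, mem_setOf_eq]
  exact ⟨fun H n => H n n le_rfl, fun H n m _ => H m⟩

lemma tendsto_stayE (s : S) (X : Set S) :
    Tendsto (fun n => T s (stayE X n)) atTop (nhds (T s (invEvent X))) := by
  rw [← iInter_stayE (S := S) X]
  exact tendsto_measure_iInter_atTop
    (fun n => (meas_stayE X n).nullMeasurableSet)
    (fun n m h => stayE_anti h) ⟨0, measure_ne_top _ _⟩

/-- The tail-event bound: if on `C` the avoid-probability is below `θ`,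
then all `tailE C A N` have probability below `θ`. -/
lemma tailE_bound (hT : IsTrajKernel P T) {C A : Set S} {θ : ℝ≥0∞}
    (hC : ∀ s ∈ C, T s (avoidE A) ≤ θ) :
    ∀ N s, T s (tailE C A N) ≤ θ := by
  intro N
  induction N with
  | zero =>
    intro s
    by_cases h : s ∈ C
    · calc T s (tailE C A 0) ≤ T s (avoidE A) := by
            apply measure_mono; rintro ω ⟨_, h2⟩; exact fun n => h2 n (by omega)
      _ ≤ θ := hC s h
    · calc T s (tailE C A 0) ≤ T s {ω : ℕ → S | ω 0 ∈ C} := by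
            apply measure_mono; rintro ω ⟨h1, _⟩; exact h1
      _ = 0 := T_coord0_not P T hT h
      _ ≤ θ := zero_le
  | succ N ih =>
    intro s
    rw [T_tailE_succ P T hT s C A N]
    calc ∫⁻ u, T u (tailE C A N) ∂(P s) ≤ ∫⁻ _, θ ∂(P s) :=
          lintegral_mono fun u => ih u
    _ = θ := by simp

/-- Almost-sure escape: if the stay-forever probability is uniformly below `Q < 1` on `D`,
then it is zero everywhere. -/
lemma stay_forever_zero (hT : IsTrajKernel P T) {D : Set S} {Q : ℝ≥0∞}
    (hQ1 : Q < 1) (hD : ∀ s ∈ D, T s (invEvent D) ≤ Q) :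
    ∀ s, T s (invEvent D) = 0 := by
  have hQtop : Q ≠ ⊤ := (hQ1.trans one_lt_top).ne
  have hiter : ∀ n s, T s (invEvent D) ≤ Q * T s (stayE D n) := by
    intro n
    induction n with
    | zero =>
      intro s
      by_cases h : s ∈ D
      · rw [T_stayE_zero_mem P T hT h, mul_one]; exact hD s h
      · rw [T_invEvent_not P T hT h]; exact zero_le
    | succ n ih =>
      intro s
      by_cases h : s ∈ D
      · rw [T_invEvent_mem P T hT h, T_stayE_succ_mem P T hT h n, ← lintegral_const_mul Q
          (Measurable.of_discrete)]
        exact lintegral_mono fun u => ih u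
      · rw [T_invEvent_not P T hT h]; exact zero_le
  intro s
  have hle : T s (invEvent D) ≤ Q * T s (invEvent D) := by
    have htend : Tendsto (fun n => Q * T s (stayE D n)) atTop
        (nhds (Q * T s (invEvent D))) :=
      ENNReal.Tendsto.const_mul (tendsto_stayE T s D) (Or.inr hQtop)
    exact ge_of_tendsto' htend (fun n => hiter n s)
  by_contra hne
  have hpos : 0 < T s (invEvent D) := pos_iff_ne_zero.2 hne
  have hlt : Q * T s (invEvent D) < 1 * T s (invEvent D) := by
    exact ENNReal.mul_lt_mul_left hne (measure_ne_top _ _) hQ1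
  rw [one_mul] at hlt
  exact absurd (hle.trans_lt hlt) (lt_irrefl _)

end Kernel

/-! ### Construction of the ranking pair (W, U) -/

section WU
variable (P : Kernel S S) [IsMarkovKernel P] (T : Kernel S (ℕ → S)) [IsMarkovKernel T]

lemma getWU (hT : IsTrajKernel P T) (D : Set S)
    (hq : ∀ s, T s (invEvent D) = 0) :
    ∃ (W : S → ℝ) (U : S → ℕ),
      (∀ s, 0 ≤ W s) ∧
      (∀ s ∉ D, W s = 0 ∧ U s = 0) ∧
      (∀ s ∈ D, 0 < W s) ∧
      (∀ s ∈ D, ∫⁻ u, ENNReal.ofReal (W u) ∂(P s) ≤ ENNReal.ofReal (W s)) ∧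
      (∀ r : ℝ, 0 ≤ r → ∃ N : ℕ, ∀ s, W s ≤ r → U s ≤ N) ∧
      (∀ r : ℝ, 0 ≤ r → ∃ δ : ℝ≥0∞, 0 < δ ∧
        ∀ s ∈ D, W s ≤ r → δ ≤ P s {u | U u < U s}) := by
  classical
  rcases isEmpty_or_nonempty S with hS | hS
  · refine ⟨fun _ => 0, fun _ => 0, fun s => le_rfl, fun s _ => ⟨rfl, rfl⟩,
      fun s => (IsEmpty.false s).elim, fun s => (IsEmpty.false s).elim,
      fun r _ => ⟨0, fun s => (IsEmpty.false s).elim⟩,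
      fun r _ => ⟨1, zero_lt_one, fun s => (IsEmpty.false s).elim⟩⟩
  obtain ⟨d, hd⟩ := exists_surjective_nat S
  set r : ℕ → S → ℝ≥0∞ := fun n s => T s (stayE D n) with hrdef
  have hrle1 : ∀ n s, r n s ≤ 1 := fun n s => prob_le_one
  have hrnot : ∀ n {s}, s ∉ D → r n s = 0 := fun n h hs => T_stayE_not P T hT hs n
  have hr0mem : ∀ {s}, s ∈ D → r 0 s = 1 := fun hs => T_stayE_zero_mem P T hT hs
  have hrsucc : ∀ n {s}, s ∈ D → r (n + 1) s = ∫⁻ u, r n u ∂(P s) :=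
    fun n hs h => T_stayE_succ_mem P T hT h n
  have hranti : ∀ s, Antitone (fun n => r n s) :=
    fun s n m hnm => measure_mono (stayE_anti hnm)
  have hrtend : ∀ s, Tendsto (fun n => r n s) atTop (nhds 0) := by
    intro s
    have := tendsto_stayE T s D
    rwa [hq s] at this
  have hhalfpos : (0 : ℝ≥0∞) < 2⁻¹ := ENNReal.inv_pos.2 (by norm_num)
  have hhalfle1 : (2⁻¹ : ℝ≥0∞) ≤ 1 := ENNReal.inv_le_one.2 one_le_two
  have hhalfadd : (2⁻¹ : ℝ≥0∞) + 2⁻¹ = 1 := by rw [← one_div]; exact ENNReal.add_halves 1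
  set κ : ℕ → ℝ≥0∞ := fun n => 2⁻¹ + 2⁻¹ ^ (n + 2) with hκdef
  have hκle1 : ∀ n, κ n ≤ 1 := by
    intro n
    have h1 : (2⁻¹ : ℝ≥0∞) ^ (n + 2) = 2⁻¹ ^ (n+1) * 2⁻¹ := pow_succ _ _
    have h2 : (2⁻¹ : ℝ≥0∞) ^ (n+1) * 2⁻¹ ≤ 1 * 2⁻¹ :=
      mul_le_mul_left (pow_le_one' hhalfle1 _) _
    calc κ n ≤ 2⁻¹ + 1 * 2⁻¹ := add_le_add_right (h1 ▸ h2) _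
    _ = 1 := by rw [one_mul]; exact hhalfadd
  have hκhalf : ∀ n, 2⁻¹ ≤ κ n := fun n => le_self_add
  have hκtop : ∀ n, κ n ≠ ⊤ := fun n => ((hκle1 n).trans_lt one_lt_top).ne
  have hκsucc : ∀ n, κ n = κ (n + 1) + 2⁻¹ ^ (n + 3) := by
    intro n
    have h2 : (2⁻¹ : ℝ≥0∞) ^ (n + 2) = 2⁻¹ ^ (n + 3) + 2⁻¹ ^ (n + 3) := by
      have : (2⁻¹ : ℝ≥0∞) ^ (n + 3) = 2⁻¹ ^ (n + 2) * 2⁻¹ := pow_succ _ _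
      rw [this, ← mul_add, hhalfadd, mul_one]
    show 2⁻¹ + 2⁻¹ ^ (n + 2) = 2⁻¹ + 2⁻¹ ^ (n + 1 + 2) + 2⁻¹ ^ (n + 3)
    rw [h2]
    have : n + 1 + 2 = n + 3 := by omega
    rw [this, add_assoc]
  have hUex : ∀ s, ∃ n, r n s < κ n := by
    intro s
    obtain ⟨n, hn⟩ := ((hrtend s).eventually_lt_const hhalfpos).exists
    exact ⟨n, hn.trans_le (hκhalf n)⟩
  set U : S → ℕ := fun s => Nat.find (hUex s) with hUdef
  have hUspec : ∀ s, r (U s) s < κ (U s) := fun s => Nat.find_spec (hUex s)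
  have hUmin : ∀ s m, m < U s → κ m ≤ r m s :=
    fun s m hm => le_of_not_gt (Nat.find_min (hUex s) hm)
  have hU0 : ∀ s, s ∉ D → U s = 0 := by
    intro s hs
    have h0 : r 0 s < κ 0 := by
      rw [hrnot 0 hs]
      exact lt_of_lt_of_le hhalfpos (hκhalf 0)
    exact Nat.eq_zero_of_le_zero (Nat.find_le h0)
  have hUpos : ∀ s, s ∈ D → 0 < U s := by
    intro s hs
    rcases Nat.eq_zero_or_pos (U s) with h | h
    · exfalso
      have := hUspec s
      rw [h, hr0mem hs] at this
      exact absurd (this.trans_le (hκle1 0)) (lt_irrefl _)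
    · exact h
  -- one-step decrease with probability depending only on U s
  have hdec : ∀ s ∈ D, 2⁻¹ ^ (U s + 2) ≤ P s {u | U u < U s} := by
    intro s hs
    obtain ⟨n, hn⟩ : ∃ n, U s = n + 1 := ⟨U s - 1, by have := hUpos s hs; omega⟩
    set F : Set S := {u | U u < U s} with hF
    have key1 : r (n + 1) s < κ (n + 1) := by rw [← hn]; exact hUspec s
    have key2 : ∀ u, u ∉ F → κ n ≤ r n u := by
      intro u hu
      apply hUmin u n
      simp only [hF, mem_setOf_eq, not_lt, hn] at hu ⊢
      omega
    have key3 : κ n * P s Fᶜ ≤ r (n + 1) s := by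
      rw [hrsucc n hs]
      calc κ n * P s Fᶜ = ∫⁻ _ in Fᶜ, κ n ∂(P s) := (setLIntegral_const _ _).symm
      _ ≤ ∫⁻ u in Fᶜ, r n u ∂(P s) :=
          setLIntegral_mono Measurable.of_discrete (fun u hu => key2 u hu)
      _ ≤ ∫⁻ u, r n u ∂(P s) := setLIntegral_le_lintegral _ _
    have hPsplit : P s F + P s Fᶜ = 1 := by
      rw [measure_add_measure_compl MeasurableSet.of_discrete, measure_univ]
    have main : κ n ≤ P s F + κ (n + 1) := by
      calc κ n = κ n * (P s F + P s Fᶜ) := by rw [hPsplit, mul_one]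
      _ = κ n * P s F + κ n * P s Fᶜ := mul_add _ _ _
      _ ≤ 1 * P s F + r (n + 1) s := add_le_add
            (mul_le_mul_left (hκle1 n) _) key3
      _ ≤ P s F + κ (n + 1) := by rw [one_mul]; exact add_le_add_right key1.le _
    rw [hκsucc n, add_comm (P s F) (κ (n+1)), ← add_comm (2⁻¹ ^ (n+3)) (κ (n+1))] at main
    rw [add_comm (2⁻¹ ^ (n+3)) (κ (n+1))] at main
    have := (ENNReal.add_le_add_iff_left (hκtop (n + 1))).1 main
    calc (2⁻¹ : ℝ≥0∞) ^ (U s + 2) = 2⁻¹ ^ (n + 3) := by rw [hn]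
    _ ≤ P s F := this
  -- diagonal choice of times
  have hex : ∀ (j : ℕ) (t : ℝ≥0∞), 0 < t → ∃ m, ∀ k ≤ j, r m (d k) < t := by
    intro j
    induction j with
    | zero =>
      intro t ht
      obtain ⟨m, hm⟩ := ((hrtend (d 0)).eventually_lt_const ht).exists
      exact ⟨m, fun k hk => by rw [Nat.le_zero.1 hk]; exact hm⟩
    | succ j ih =>
      intro t ht
      obtain ⟨m₁, hm₁⟩ := ih t ht
      obtain ⟨m₂, hm₂⟩ := ((hrtend (d (j + 1))).eventually_lt_const ht).exists
      refine ⟨max m₁ m₂, fun k hk => ?_⟩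
      rcases Nat.lt_or_ge k (j + 1) with h | h
      · exact lt_of_le_of_lt (hranti (d k) (le_max_left _ _)) (hm₁ k (by omega))
      · have : k = j + 1 := by omega
        rw [this]
        exact lt_of_le_of_lt (hranti (d (j + 1)) (le_max_right _ _)) hm₂
  have hpowpos : ∀ j : ℕ, (0 : ℝ≥0∞) < 2⁻¹ ^ j := fun j => ENNReal.pow_pos hhalfpos j
  set nn : ℕ → ℕ := fun j => (hex j (2⁻¹ ^ j) (hpowpos j)).choose with hnndef
  have hnn : ∀ j, ∀ k ≤ j, r (nn j) (d k) < 2⁻¹ ^ j :=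
    fun j => (hex j (2⁻¹ ^ j) (hpowpos j)).choose_spec
  have hgeom : ∑' j, (2⁻¹ : ℝ≥0∞) ^ j = 2 := by
    rw [ENNReal.tsum_geometric]
    have h1 : (1 : ℝ≥0∞) - 2⁻¹ = 2⁻¹ := by simp
    rw [h1, inv_inv]
  set 𝒲 : S → ℝ≥0∞ := fun s => D.indicator 1 s + ∑' j, r (nn j) s with h𝒲def
  have hind_le : ∀ s, D.indicator (1 : S → ℝ≥0∞) s ≤ 1 := by
    intro s; by_cases h : s ∈ D <;> simp [h]
  have h𝒲top : ∀ s, 𝒲 s ≠ ⊤ := by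
    intro s
    obtain ⟨k, rfl⟩ := hd s
    have hbound : ∀ j, r (nn j) (d k) ≤
        (↑(Finset.range (k + 1)) : Set ℕ).indicator 1 j + 2⁻¹ ^ j := by
      intro j
      rcases Nat.lt_or_ge j (k + 1) with h | h
      · calc r (nn j) (d k) ≤ 1 := hrle1 _ _
        _ ≤ _ := by
            rw [Set.indicator_of_mem (by simpa using h)]
            exact le_self_add
      · calc r (nn j) (d k) ≤ 2⁻¹ ^ j := (hnn j k (by omega)).le
        _ ≤ _ := le_add_self
    have hind : ∑' j, (↑(Finset.range (k + 1)) : Set ℕ).indicator (1 : ℕ → ℝ≥0∞) j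
        = ((k + 1 : ℕ) : ℝ≥0∞) := by
      rw [tsum_eq_sum (s := Finset.range (k + 1))
        (fun b hb => Set.indicator_of_notMem (by simpa using hb) _)]
      rw [Finset.sum_congr rfl (fun j hj => Set.indicator_of_mem (by simpa using hj) _)]
      simp
    have htsum : ∑' j, r (nn j) (d k) ≤ ((k + 1 : ℕ) : ℝ≥0∞) + 2 := by
      calc ∑' j, r (nn j) (d k)
          ≤ ∑' j, ((↑(Finset.range (k + 1)) : Set ℕ).indicator 1 j + 2⁻¹ ^ j) :=
            ENNReal.tsum_le_tsum hbound
      _ = (∑' j, (↑(Finset.range (k + 1)) : Set ℕ).indicator (1 : ℕ → ℝ≥0∞) j)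
            + ∑' j, (2⁻¹ : ℝ≥0∞) ^ j := ENNReal.tsum_add
      _ ≤ _ := by rw [hind, hgeom]
    apply ENNReal.add_ne_top.2
    refine ⟨((hind_le _).trans_lt one_lt_top).ne, ?_⟩
    exact (htsum.trans_lt (by
      apply ENNReal.add_lt_top.2
      exact ⟨ENNReal.natCast_lt_top _, by norm_num⟩)).ne
  set W : S → ℝ := fun s => (𝒲 s).toReal with hWdef
  have hWofReal : ∀ s, ENNReal.ofReal (W s) = 𝒲 s := fun s => ENNReal.ofReal_toReal (h𝒲top s)
  have hWnotD : ∀ s, s ∉ D → W s = 0 := by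
    intro s hs
    have h0 : 𝒲 s = 0 := by
      simp only [h𝒲def]
      rw [Set.indicator_of_notMem hs]
      have : ∀ j, r (nn j) s = 0 := fun j => hrnot _ hs
      simp [this]
    simp [hWdef, h0]
  have h𝒲ge1 : ∀ s, s ∈ D → 1 ≤ 𝒲 s := by
    intro s hs
    calc (1 : ℝ≥0∞) = D.indicator 1 s := by rw [Set.indicator_of_mem hs]; rfl
    _ ≤ 𝒲 s := le_self_add
  have hWposD : ∀ s, s ∈ D → 0 < W s := by
    intro s hs
    have h1 : (1 : ℝ) ≤ W s := by
      have := ENNReal.toReal_mono (h𝒲top s) (h𝒲ge1 s hs)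
      simpa using this
    linarith
  have hWsuper : ∀ s ∈ D, ∫⁻ u, ENNReal.ofReal (W u) ∂(P s) ≤ ENNReal.ofReal (W s) := by
    intro s hs
    rw [hWofReal s]
    calc ∫⁻ u, ENNReal.ofReal (W u) ∂(P s) = ∫⁻ u, 𝒲 u ∂(P s) :=
          lintegral_congr fun u => hWofReal u
    _ = (∫⁻ u, D.indicator 1 u ∂(P s)) + ∫⁻ u, ∑' j, r (nn j) u ∂(P s) :=
          lintegral_add_left Measurable.of_discrete _
    _ ≤ 1 + ∑' j, r (nn j) s := by
          apply add_le_add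
          · rw [lintegral_indicator_one MeasurableSet.of_discrete]
            exact prob_le_one
          · rw [lintegral_tsum (fun j => Measurable.of_discrete.aemeasurable)]
            apply ENNReal.tsum_le_tsum
            intro j
            rw [← hrsucc (nn j) hs]
            exact hranti s (Nat.le_succ _)
    _ = 𝒲 s := by rw [h𝒲def]; simp only []; rw [Set.indicator_of_mem hs]; rfl
  have hBdd : ∀ r' : ℝ, 0 ≤ r' → ∃ N : ℕ, ∀ s, W s ≤ r' → U s ≤ N := by
    intro r' hr'
    set K : ℕ := 2 * ⌈r'⌉₊ + 1 with hK
    refine ⟨(Finset.range (K + 1)).sup nn + 1, fun s hWs => ?_⟩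
    by_contra hUs
    push_neg at hUs
    have hterm : ∀ j ≤ K, (2⁻¹ : ℝ≥0∞) ≤ r (nn j) s := by
      intro j hj
      have h1 : nn j < U s := by
        have : nn j ≤ (Finset.range (K + 1)).sup nn :=
          Finset.le_sup (Finset.mem_range.2 (by omega))
        omega
      exact (hκhalf (nn j)).trans (hUmin s (nn j) h1)
    have hsum : ((K + 1 : ℕ) : ℝ≥0∞) * 2⁻¹ ≤ ∑' j, r (nn j) s := by
      calc ((K + 1 : ℕ) : ℝ≥0∞) * 2⁻¹ = ∑ _j ∈ Finset.range (K + 1), (2⁻¹ : ℝ≥0∞) := by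
            rw [Finset.sum_const, Finset.card_range, nsmul_eq_mul]
      _ ≤ ∑ j ∈ Finset.range (K + 1), r (nn j) s :=
            Finset.sum_le_sum (fun j hj => hterm j (Nat.lt_succ_iff.1 (Finset.mem_range.1 hj)))
      _ ≤ ∑' j, r (nn j) s := ENNReal.sum_le_tsum _
    have h𝒲ge : ((K + 1 : ℕ) : ℝ≥0∞) * 2⁻¹ ≤ 𝒲 s := hsum.trans le_add_self
    have hreal : ((K + 1 : ℕ) : ℝ) * (2 : ℝ)⁻¹ ≤ W s := by
      have := ENNReal.toReal_mono (h𝒲top s) h𝒲ge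
      rw [ENNReal.toReal_mul, ENNReal.toReal_natCast] at this
      simpa using this
    have hceil : (r' : ℝ) ≤ (⌈r'⌉₊ : ℝ) := Nat.le_ceil r'
    have hgt : ((K + 1 : ℕ) : ℝ) * (2 : ℝ)⁻¹ > r' := by
      have hKval : ((K + 1 : ℕ) : ℝ) = 2 * (⌈r'⌉₊ : ℝ) + 2 := by
        rw [hK]; push_cast; ring
      rw [hKval]; nlinarith
    linarith
  refine ⟨W, U, fun s => ENNReal.toReal_nonneg, fun s hs => ⟨hWnotD s hs, hU0 s hs⟩,
    hWposD, hWsuper, hBdd, ?_⟩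
  intro r' hr'
  obtain ⟨N, hN⟩ := hBdd r' hr'
  refine ⟨2⁻¹ ^ (N + 2), hpowpos _, fun s hs hWs => ?_⟩
  calc (2⁻¹ : ℝ≥0∞) ^ (N + 2) ≤ 2⁻¹ ^ (U s + 2) :=
        pow_le_pow_right_of_le_one' hhalfle1 (by have := hN s hWs; omega)
  _ ≤ P s {u | U u < U s} := hdec s hs
end WU


/-! ### Per-index construction -/

lemma meas_avoid_shift_event (A : Set S) :
    MeasurableSet {ω : ℕ → S | ∀ n, ω (n + 1) ∉ A} := by
  have : {ω : ℕ → S | ∀ n, ω (n + 1) ∉ A} = ⋂ n, {ω : ℕ → S | ω (n + 1) ∈ Aᶜ} := by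
    ext ω; simp
  rw [this]
  exact MeasurableSet.iInter fun n => meas_coord (n + 1) Aᶜ

section PerIndex
variable (P : Kernel S S) [IsMarkovKernel P] (T : Kernel S (ℕ → S)) [IsMarkovKernel T]

lemma per_index (hT : IsTrajKernel P T) (Ai Bi : Set S) (I : Set S)
    (G : Set (ℕ → S)) (c θ : ℝ) (hc0 : 0 < c) (hθ0 : 0 < θ) (hcθ : c + θ < 1)
    (hGsub : ∀ ω ∈ G, ω ∈ finVisits Ai ∪ infVisits Bi)
    (hI : ∀ s ∈ I, T s Gᶜ ≤ ENNReal.ofReal c) :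
    ∃ (J : Set S) (V W : S → ℝ) (U : S → ℕ),
      J ⊆ I \ Ai ∧
      (∀ s, 0 ≤ V s) ∧ (∀ s, 0 ≤ W s) ∧
      (∀ s, ∫⁻ u, ENNReal.ofReal (V u) ∂(P s) ≤ ENNReal.ofReal (V s)) ∧
      (∀ s ∈ Ai, 1 ≤ V s) ∧
      (∃ γ : ℝ, 0 < γ ∧ ∀ s ∈ J, V s ≤ 1 - γ) ∧
      (∀ s ∈ I \ (Bi ∪ J), ∫⁻ u, ENNReal.ofReal (W u) ∂(P s) ≤ ENNReal.ofReal (W s)) ∧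
      (∀ s ∈ I \ (Bi ∪ J), 0 < W s) ∧
      (∀ s ∈ I ∩ (Bi ∪ J), W s = 0 ∧ U s = 0) ∧
      (∀ r : ℝ, 0 ≤ r → ∃ δ : ℝ≥0∞, 0 < δ ∧
        ∀ s ∈ I \ (Bi ∪ J), W s ≤ r → δ ≤ P s {s' | U s' < U s}) ∧
      (∀ r : ℝ, 0 ≤ r → ∃ N : ℕ, ∀ s ∈ I, W s ≤ r → U s ≤ N) := by
  classical
  set a : S → ℝ≥0∞ := fun s => T s (avoidE Ai) with hadef
  have hale1 : ∀ s, a s ≤ 1 := fun s => prob_le_one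
  have hatop : ∀ s, a s ≠ ⊤ := fun s => ((hale1 s).trans_lt one_lt_top).ne
  set J : Set S := {s | s ∈ I ∧ s ∉ Ai ∧ ENNReal.ofReal θ ≤ a s} with hJdef
  set V : S → ℝ := fun s => 1 - (a s).toReal / 2 with hVdef
  have haToReal01 : ∀ s, 0 ≤ (a s).toReal ∧ (a s).toReal ≤ 1 := by
    intro s
    refine ⟨ENNReal.toReal_nonneg, ?_⟩
    have := ENNReal.toReal_mono (by norm_num : (1 : ℝ≥0∞) ≠ ⊤) (hale1 s)
    simpa using this
  have hV0 : ∀ s, 0 ≤ V s := by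
    intro s
    obtain ⟨h1, h2⟩ := haToReal01 s
    simp only [hVdef]; linarith
  have hofRealV : ∀ s, ENNReal.ofReal (V s) = 1 - a s / 2 := by
    intro s
    simp only [hVdef]
    rw [ENNReal.ofReal_sub _ (by positivity), ENNReal.ofReal_one,
      ENNReal.ofReal_div_of_pos two_pos, ENNReal.ofReal_toReal (hatop s),
      ENNReal.ofReal_ofNat]
  have hVsuper : ∀ s, ∫⁻ u, ENNReal.ofReal (V u) ∂(P s) ≤ ENNReal.ofReal (V s) := by
    intro s
    have hstep : ∫⁻ u, a u ∂(P s) = T s {ω : ℕ → S | ∀ n, ω (n + 1) ∉ Ai} := by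
      rw [step P T hT s (meas_avoid_shift_event Ai)]
      apply lintegral_congr
      intro u
      rw [pre_avoid_shift]
    have hmono : a s ≤ ∫⁻ u, a u ∂(P s) := by
      rw [hstep]
      apply measure_mono
      intro ω hω n
      exact hω (n + 1)
    have hle : ∀ u, a u / 2 ≤ (1 : ℝ≥0∞) :=
      fun u => le_trans (ENNReal.div_le_div_right (hale1 u) 2) ENNReal.half_le_self
    have hdivtop : ∫⁻ u, a u / 2 ∂(P s) ≠ ⊤ := by
      have h1 : ∫⁻ u, a u / 2 ∂(P s) ≤ 1 := by
        calc ∫⁻ u, a u / 2 ∂(P s) ≤ ∫⁻ _, (1 : ℝ≥0∞) ∂(P s) := lintegral_mono hle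
        _ = 1 := by simp
      exact (h1.trans_lt one_lt_top).ne
    calc ∫⁻ u, ENNReal.ofReal (V u) ∂(P s) = ∫⁻ u, 1 - a u / 2 ∂(P s) :=
          lintegral_congr fun u => hofRealV u
    _ = ∫⁻ _, (1:ℝ≥0∞) ∂(P s) - ∫⁻ u, a u / 2 ∂(P s) := by
          apply lintegral_sub Measurable.of_discrete hdivtop
          filter_upwards with u
          exact hle u
    _ = 1 - (∫⁻ u, a u ∂(P s)) / 2 := by
          rw [lintegral_one, measure_univ]
          congr 1
          simp only [div_eq_mul_inv]
          rw [lintegral_mul_const _ Measurable.of_discrete]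
    _ ≤ 1 - a s / 2 := by
          apply tsub_le_tsub_left
          exact ENNReal.div_le_div_right hmono 2
    _ = ENNReal.ofReal (V s) := (hofRealV s).symm
  have hVb : ∀ s ∈ Ai, 1 ≤ V s := by
    intro s hs
    have h0 : a s = 0 := T_avoidE_mem P T hT hs
    simp [hVdef, h0]
  have hVc : ∃ γ : ℝ, 0 < γ ∧ ∀ s ∈ J, V s ≤ 1 - γ := by
    refine ⟨θ / 2, by linarith, fun s hs => ?_⟩
    have hθa : θ ≤ (a s).toReal := by
      have := hs.2.2
      exact (ENNReal.ofReal_le_iff_le_toReal (hatop s)).1 this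
    simp only [hVdef]
    linarith
  set D : Set S := I \ (Bi ∪ J) with hDdef
  have hq : ∀ s, T s (invEvent D) = 0 := by
    apply stay_forever_zero P T hT (Q := ENNReal.ofReal θ + ENNReal.ofReal c)
    · rw [← ENNReal.ofReal_add hθ0.le hc0.le]
      exact ENNReal.ofReal_lt_one.2 (by linarith)
    · intro s hs
      set C : Set S := D \ Ai with hCdef
      have hC : ∀ u ∈ C, T u (avoidE Ai) ≤ ENNReal.ofReal θ := by
        intro u hu
        by_contra hcon
        push_neg at hcon
        have huJ : u ∈ J := ⟨hu.1.1, hu.2, hcon.le⟩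
        exact hu.1.2 (Or.inr huJ)
      have htail := tailE_bound P T hT hC
      have hsplit : T s (invEvent D) ≤ T s (invEvent D ∩ G) + T s Gᶜ := by
        calc T s (invEvent D) ≤ T s ((invEvent D ∩ G) ∪ Gᶜ) := by
              apply measure_mono
              intro ω hω
              by_cases hG : ω ∈ G
              · exact Or.inl ⟨hω, hG⟩
              · exact Or.inr hG
        _ ≤ _ := measure_union_le _ _
      have hIG : T s (invEvent D ∩ G) ≤ ENNReal.ofReal θ := by
        have hsub : invEvent D ∩ G ⊆ ⋃ M, ⋂ N, ⋂ (_ : M ≤ N), tailE C Ai N := by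
          rintro ω ⟨hinv, hG⟩
          rcases hGsub ω hG with hfin | hinf
          · obtain ⟨n₀, hn₀⟩ := hfin
            refine mem_iUnion.2 ⟨n₀, ?_⟩
            simp only [mem_iInter]
            intro N hN
            exact ⟨⟨hinv N, hn₀ N hN⟩, fun m hm => hn₀ m (le_trans hN hm)⟩
          · exfalso
            obtain ⟨m, _, hmB⟩ := hinf 0
            exact (hinv m).2 (Or.inl hmB)
        calc T s (invEvent D ∩ G) ≤ T s (⋃ M, ⋂ N, ⋂ (_ : M ≤ N), tailE C Ai N) :=
              measure_mono hsub
        _ = ⨆ M, T s (⋂ N, ⋂ (_ : M ≤ N), tailE C Ai N) := by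
              apply Directed.measure_iUnion
              apply Monotone.directed_le
              intro M M' hMM'
              apply iInter_mono
              intro N
              intro ω hω
              simp only [mem_iInter] at hω ⊢
              intro h
              exact hω (le_trans hMM' h)
        _ ≤ ENNReal.ofReal θ := by
              apply iSup_le
              intro M
              calc T s (⋂ N, ⋂ (_ : M ≤ N), tailE C Ai N) ≤ T s (tailE C Ai M) := by
                    apply measure_mono
                    intro ω hω
                    simp only [mem_iInter] at hω
                    exact hω M le_rfl
              _ ≤ ENNReal.ofReal θ := htail M s
      calc T s (invEvent D) ≤ T s (invEvent D ∩ G) + T s Gᶜ := hsplit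
      _ ≤ ENNReal.ofReal θ + ENNReal.ofReal c := add_le_add hIG (hI s hs.1)
  obtain ⟨W, U, hW0, hWout, hWpos, hWsuper, hBdd, hDec⟩ := getWU P T hT D hq
  refine ⟨J, V, W, U, ?_, hV0, hW0, hVsuper, hVb, hVc, ?_, ?_, ?_, ?_, ?_⟩
  · intro s hs
    exact ⟨hs.1, hs.2.1⟩
  · intro s hs
    exact hWsuper s hs
  · intro s hs
    exact hWpos s hs
  · intro s hs
    have : s ∉ D := fun hD' => hD'.2 hs.2
    exact hWout s this
  · intro r hr
    obtain ⟨δ, hδ, h⟩ := hDec r hr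
    exact ⟨δ, hδ, fun s hs => h s hs⟩
  · intro r hr
    obtain ⟨N, hN⟩ := hBdd r hr
    exact ⟨N, fun s _ hWs => hN s hWs⟩

end PerIndex

end Aux

/-- ε-completeness of Proof Rule #1 on countable state spaces.  If the
reactivity property holds with probability `p ∈ (0,1]`, then for every `ε > 0` there
exist an invariant region with certificate `V₀`, absorbing regions `Jᵢ`,
supermartingale certificates `Vᵢ, Wᵢ`, and ranking functions `Uᵢ` satisfying all the
conditions of Proof Rule #1, with `μV₀ ≤ 1 − p + ε`. -/
theorem proof_rule_one_eps_complete
    {S : Type*} [MeasurableSpace S] [DiscreteMeasurableSpace S] [Countable S]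
    (P : Kernel S S) [IsMarkovKernel P]
    (T : Kernel S (ℕ → S)) [IsMarkovKernel T] (hT : IsTrajKernel P T)
    (μ : Measure S) [IsProbabilityMeasure μ]
    (k : ℕ) (A B : Fin k → Set S)
    (p : ℝ) (hp0 : 0 < p) (hp1 : p ≤ 1)
    (hprob : (μ.bind (fun s => (T s : Measure (ℕ → S))))
      (⋂ i, finVisits (A i) ∪ infVisits (B i)) = ENNReal.ofReal p)
    (ε : ℝ) (hε : 0 < ε) :
    ∃ (I : Set S) (V₀ : S → ℝ) (J : Fin k → Set S)
      (V W : Fin k → S → ℝ) (U : Fin k → S → ℕ),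
      (∀ s, 0 ≤ V₀ s) ∧
      (∀ i s, 0 ≤ V i s) ∧ (∀ i s, 0 ≤ W i s) ∧
      (∀ i, J i ⊆ I \ A i) ∧
      (∀ i, ∀ s ∉ A i,
        ∫⁻ u, ENNReal.ofReal (V i u) ∂(P s) ≤ ENNReal.ofReal (V i s)) ∧
      (∀ i, ∀ s ∈ A i, 1 ≤ V i s) ∧
      (∀ i, ∃ γ : ℝ, 0 < γ ∧ ∀ s ∈ J i, V i s ≤ 1 - γ) ∧
      (∀ i, ∀ s ∈ I \ (B i ∪ J i),
        ∫⁻ u, ENNReal.ofReal (W i u) ∂(P s) ≤ ENNReal.ofReal (W i s)) ∧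
      (∀ i, ∀ s ∈ I \ (B i ∪ J i), 0 < W i s) ∧
      (∀ i, ∀ s ∈ I ∩ (B i ∪ J i), W i s = 0 ∧ U i s = 0) ∧
      (∀ i, ∀ r : ℝ, 0 ≤ r → ∃ δ : ℝ≥0∞, 0 < δ ∧
        ∀ s ∈ I \ (B i ∪ J i), W i s ≤ r → δ ≤ P s {s' | U i s' < U i s}) ∧
      (∀ i, ∀ r : ℝ, 0 ≤ r → ∃ N : ℕ, ∀ s ∈ I, W i s ≤ r → U i s ≤ N) ∧
      (∀ s ∈ I, ∫⁻ u, ENNReal.ofReal (V₀ u) ∂(P s) ≤ ENNReal.ofReal (V₀ s)) ∧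
      (∀ s ∉ I, 1 ≤ V₀ s) ∧
      ∫⁻ s, ENNReal.ofReal (V₀ s) ∂μ ≤ ENNReal.ofReal (1 - p + ε) := by
  classical
  set G : Set (ℕ → S) := ⋂ i, finVisits (A i) ∪ infVisits (B i) with hGdef
  have hGmeas : MeasurableSet G :=
    MeasurableSet.iInter fun i => (meas_finVisits (A i)).union (meas_infVisits (B i))
  have hGpre : ∀ s : S, consTraj s ⁻¹' G = G := by
    intro s
    rw [hGdef, preimage_iInter]
    apply iInter_congr
    intro i
    rw [preimage_union, pre_finVisits, pre_infVisits]
  have hden : 0 < 1 - p + ε := by linarith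
  set c : ℝ := (1 - p + ε / 2) / (1 - p + ε) with hcdef
  have hc0 : 0 < c := div_pos (by linarith) hden
  have hc1 : c < 1 := (div_lt_one hden).2 (by linarith)
  set θ : ℝ := (1 - c) / 2 with hθdef
  have hθ0 : 0 < θ := by rw [hθdef]; linarith
  have hcθ : c + θ < 1 := by rw [hθdef]; linarith
  set I : Set S := {s | T s Gᶜ < ENNReal.ofReal c} with hIdef
  set V₀ : S → ℝ := fun s => (T s Gᶜ).toReal / c with hV₀def
  have hGctop : ∀ s : S, T s Gᶜ ≠ ⊤ := fun s => measure_ne_top _ _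
  have hofRealV₀ : ∀ s, ENNReal.ofReal (V₀ s) = T s Gᶜ / ENNReal.ofReal c := by
    intro s
    simp only [hV₀def]
    rw [ENNReal.ofReal_div_of_pos hc0, ENNReal.ofReal_toReal (hGctop s)]
  have hV₀0 : ∀ s, 0 ≤ V₀ s := fun s => div_nonneg ENNReal.toReal_nonneg hc0.le
  have hharm : ∀ s, ∫⁻ u, T u Gᶜ ∂(P s) = T s Gᶜ := by
    intro s
    rw [step P T hT s hGmeas.compl, preimage_compl, hGpre s]
  have hVi : ∀ s, ∫⁻ u, ENNReal.ofReal (V₀ u) ∂(P s) ≤ ENNReal.ofReal (V₀ s) := by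
    intro s
    rw [hofRealV₀ s]
    apply le_of_eq
    calc ∫⁻ u, ENNReal.ofReal (V₀ u) ∂(P s)
        = ∫⁻ u, T u Gᶜ / ENNReal.ofReal c ∂(P s) := lintegral_congr hofRealV₀
    _ = (∫⁻ u, T u Gᶜ ∂(P s)) / ENNReal.ofReal c := by
        simp only [div_eq_mul_inv]
        rw [lintegral_mul_const _ Measurable.of_discrete]
    _ = T s Gᶜ / ENNReal.ofReal c := by rw [hharm s]
  have hVj : ∀ s ∉ I, 1 ≤ V₀ s := by
    intro s hs
    have h : ENNReal.ofReal c ≤ T s Gᶜ := not_lt.1 hs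
    have hc' : c ≤ (T s Gᶜ).toReal := by
      have := ENNReal.toReal_mono (hGctop s) h
      rwa [ENNReal.toReal_ofReal hc0.le] at this
    simp only [hV₀def]
    rw [one_le_div hc0]
    exact hc'
  have hbindGc : (μ.bind (fun s => (T s : Measure (ℕ → S)))) Gᶜ
      = ENNReal.ofReal (1 - p) := by
    have huniv : (μ.bind (fun s => (T s : Measure (ℕ → S)))) univ = 1 := by
      rw [Measure.bind_apply MeasurableSet.univ T.measurable.aemeasurable]
      simp
    rw [measure_compl hGmeas (by rw [hprob]; exact ENNReal.ofReal_ne_top), huniv, hprob,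
      ← ENNReal.ofReal_one, ← ENNReal.ofReal_sub _ hp0.le]
  have hVk : ∫⁻ s, ENNReal.ofReal (V₀ s) ∂μ ≤ ENNReal.ofReal (1 - p + ε) := by
    calc ∫⁻ s, ENNReal.ofReal (V₀ s) ∂μ
        = ∫⁻ s, T s Gᶜ / ENNReal.ofReal c ∂μ := lintegral_congr hofRealV₀
    _ = (∫⁻ s, T s Gᶜ ∂μ) / ENNReal.ofReal c := by
        simp only [div_eq_mul_inv]
        rw [lintegral_mul_const _ Measurable.of_discrete]
    _ = ENNReal.ofReal (1 - p) / ENNReal.ofReal c := by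
        rw [← Measure.bind_apply hGmeas.compl T.measurable.aemeasurable, hbindGc]
    _ = ENNReal.ofReal ((1 - p) / c) := (ENNReal.ofReal_div_of_pos hc0).symm
    _ ≤ ENNReal.ofReal (1 - p + ε) := by
        apply ENNReal.ofReal_le_ofReal
        rw [div_le_iff₀ hc0]
        have hcc : (1 - p + ε) * c = 1 - p + ε / 2 := by
          rw [hcdef]
          field_simp
        linarith [hcc]
  have hIc : ∀ s ∈ I, T s Gᶜ ≤ ENNReal.ofReal c := fun s hs => le_of_lt hs
  have hper := fun i : Fin k =>
    per_index P T hT (A i) (B i) I G c θ hc0 hθ0 hcθ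
      (fun ω hω => mem_iInter.1 hω i) hIc
  choose J V W U hJ hV0' hW0' hVa hVb hVc hWd hWe hWf hg hh using hper
  exact ⟨I, V₀, J, V, W, U, hV₀0, hV0', hW0', hJ, fun i s _ => hVa i s, hVb, hVc,
    hWd, hWe, hWf, hg, hh, fun s _ => hVi s, hVj, hVk⟩
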